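/- arXiv:1712.00809 — 2 statements merged into one kernel-verified Lean document; each statement's English description precedes it below -/
import Mathlib

section
/- The only 2-distinguishing critical graphs are K₂ and its complement; in particular, every graph on at least 3 vertices with distinguishing number 2 contains a proper induced subgraph with distinguishing number 2. -/
/-- A labeling with `r` labels is distinguishing if the only automorphism
preserving all labels is the identity. -/
def IsDistinguishing {V : Type*} (G : SimpleGraph V) (r : ℕ) (f : V → Fin r) : Prop :=
  ∀ φ : G ≃g G, (∀ v, f (φ v) = f v) → ∀ v, φ v = v

/-- The distinguishing number of a graph. -/
noncomputable def distNum {V : Type*} (G : SimpleGraph V) : ℕ :=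
  sInf {r : ℕ | ∃ f : V → Fin r, IsDistinguishing G r f}

/-- A graph is `d`-distinguishing critical if its distinguishing number is `d`
and no proper induced subgraph has distinguishing number `d`. -/
def DistCritical {V : Type*} (G : SimpleGraph V) (d : ℕ) : Prop :=
  distNum G = d ∧ ∀ s : Set V, s ≠ Set.univ → distNum (G.induce s) ≠ d

/-- The disjoint union of `c` copies of a graph `H`. -/
def copies {W : Type*} (c : ℕ) (H : SimpleGraph W) : SimpleGraph (Fin c × W) where
  Adj a b := a.1 = b.1 ∧ H.Adj a.2 b.2
  symm := ⟨fun a b h => ⟨h.1.symm, h.2.symm⟩⟩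
  loopless := ⟨fun a h => H.loopless.irrefl a.2 h.2⟩

/-- `numDistLab G k` is the number of inequivalent `k`-distinguishing labelings of `G`,
two labelings being equivalent when some automorphism of `G` maps one to the other. -/
noncomputable def numDistLab {V : Type*} (G : SimpleGraph V) (k : ℕ) : ℕ :=
  Nat.card (Quot (fun f g : {f : V → Fin k // IsDistinguishing G k f} =>
    ∃ φ : G ≃g G, ∀ v, f.1 (φ v) = g.1 v))

/-!
A graph on at least three vertices has an induced subgraph on two vertices, and a graph on two
vertices is `K₂` or its complement, whose distinguishing number is 2: a distinguishing labeling of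
a complete or empty graph must be injective, because every transposition of two vertices is an
automorphism. Hence a 2-distinguishing critical graph has exactly two vertices.
-/

section

variable {V : Type*} {G : SimpleGraph V} {r : ℕ} {f : V → Fin r}

lemma isDistinguishing_of_injective (hf : Function.Injective f) : IsDistinguishing G r f :=
  fun _ hφ v => hf (hφ v)

lemma distNum_le_of_isDistinguishing (hf : IsDistinguishing G r f) : distNum G ≤ r :=
  Nat.sInf_le ⟨f, hf⟩

lemma distNum_le_card [Finite V] : distNum G ≤ Nat.card V :=
  distNum_le_of_isDistinguishing (isDistinguishing_of_injective (Finite.equivFin V).injective)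

lemma IsDistinguishing.injective
    (hperm : ∀ σ : Equiv.Perm V, ∀ x y, G.Adj (σ x) (σ y) ↔ G.Adj x y)
    (hf : IsDistinguishing G r f) : Function.Injective f := by
  classical
  intro a b hab
  by_contra hne
  let σ : G ≃g G := ⟨Equiv.swap a b, hperm _ _ _⟩
  have hσ : ∀ v, f (σ v) = f v := by
    intro v
    change f (Equiv.swap a b v) = f v
    rw [Equiv.swap_apply_def]
    split_ifs with hva hvb
    exacts [hva ▸ hab.symm, hvb ▸ hab, rfl]
  exact hne ((hf σ hσ a).symm.trans (Equiv.swap_apply_left a b))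

lemma distNum_eq_card [Finite V]
    (hperm : ∀ σ : Equiv.Perm V, ∀ x y, G.Adj (σ x) (σ y) ↔ G.Adj x y) :
    distNum G = Nat.card V := by
  refine distNum_le_card.antisymm (le_csInf ⟨_, _, isDistinguishing_of_injective
    (Finite.equivFin V).injective⟩ ?_)
  rintro r ⟨f, hf⟩
  simpa using Nat.card_le_card_of_injective f (hf.injective hperm)

lemma distNum_top [Finite V] : distNum (⊤ : SimpleGraph V) = Nat.card V :=
  distNum_eq_card fun σ _ _ => by simp [σ.injective.ne_iff]

lemma distNum_bot [Finite V] : distNum (⊥ : SimpleGraph V) = Nat.card V :=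
  distNum_eq_card fun _ _ _ => by simp

lemma SimpleGraph.eq_bot_or_eq_top_of_card_eq_two (G : SimpleGraph V) (hV : Nat.card V = 2) :
    G = ⊥ ∨ G = ⊤ := by
  obtain ⟨a, b, hab, huniv⟩ := Nat.card_eq_two_iff.mp hV
  have hV : ∀ x, x = a ∨ x = b := Set.eq_univ_iff_forall.mp huniv
  by_cases h : G.Adj a b
  · right
    ext x y
    rcases hV x with rfl | rfl <;> rcases hV y with rfl | rfl <;> simp [h, h.symm, hab, hab.symm]
  · left
    have h' := mt G.adj_symm h
    ext x y
    rcases hV x with rfl | rfl <;> rcases hV y with rfl | rfl <;> simp [h, h']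

lemma distNum_of_card_eq_two (hV : Nat.card V = 2) : distNum G = 2 := by
  have : Finite V := Nat.finite_of_card_ne_zero (by omega)
  rcases G.eq_bot_or_eq_top_of_card_eq_two hV with rfl | rfl
  exacts [distNum_bot.trans hV, distNum_top.trans hV]

lemma exists_distNum_induce_eq_two [Fintype V] (hV : 3 ≤ Fintype.card V) :
    ∃ s : Set V, s ≠ Set.univ ∧ distNum (G.induce s) = 2 := by
  obtain ⟨x, y, z, hxy, hxz, hyz⟩ := Fintype.two_lt_card_iff.mp hV
  refine ⟨{x, y}, fun h => ?_, distNum_of_card_eq_two ?_⟩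
  · have hz : z ∈ ({x, y} : Set V) := h ▸ Set.mem_univ z
    exact hz.elim (hxz ∘ Eq.symm) (hyz ∘ Eq.symm)
  · rw [Nat.card_coe_set_eq, Set.ncard_pair hxy]

end

theorem stmt1 {V : Type*} [Fintype V] (G : SimpleGraph V) :
    (DistCritical G 2 →
      Nonempty (G ≃g (⊤ : SimpleGraph (Fin 2))) ∨
      Nonempty (G ≃g (⊥ : SimpleGraph (Fin 2)))) ∧
    (3 ≤ Fintype.card V → distNum G = 2 →
      ∃ s : Set V, s ≠ Set.univ ∧ distNum (G.induce s) = 2) := by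
  refine ⟨fun ⟨hG, hcrit⟩ => ?_, fun hV _ => exists_distNum_induce_eq_two hV⟩
  have hle : Fintype.card V ≤ 2 := not_lt.mp fun h3 =>
    let ⟨s, hs, hds⟩ := exists_distNum_induce_eq_two h3
    hcrit s hs hds
  have hge : 2 ≤ Fintype.card V := by simpa [hG] using distNum_le_card (G := G)
  have hV : Fintype.card V = 2 := hle.antisymm hge
  let e : V ≃ Fin 2 := Fintype.equivFinOfCardEq hV
  rcases G.eq_bot_or_eq_top_of_card_eq_two (Nat.card_eq_fintype_card.trans hV) with rfl | rfl
  · exact Or.inr ⟨⟨e, by simp⟩⟩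
  · exact Or.inl ⟨SimpleGraph.Iso.completeGraph e⟩
end

section
/- If G is a disconnected d-distinguishing critical graph with d ≥ 3, then all connected components of G are pairwise isomorphic. -/
/-!
Fix a component `C` and let `S` be the set of vertices whose component is isomorphic to `C`.
`S` is a union of components and every automorphism preserves it, so an automorphism of `G`
is exactly a pair of automorphisms of `G[S]` and `G[Sᶜ]`. Hence distinguishing labelings of
`G` restrict to the two halves and those of the halves glue together, giving
`D(G) = max (D(G[S])) (D(G[Sᶜ]))`. By criticality neither proper half can reach `D(G)`, so one
of them is all of `G`; as `S` contains `C`, `S` is everything.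
-/

open SimpleGraph

section

variable {V : Type*} {G : SimpleGraph V}

lemma IsDistinguishing.castLE {r r' : ℕ} (h : r ≤ r') {f : V → Fin r}
    (hf : IsDistinguishing G r f) : IsDistinguishing G r' (Fin.castLE h ∘ f) :=
  fun φ hφ => hf φ fun v => Fin.castLE_injective h (hφ v)

lemma distNum_le {r : ℕ} {f : V → Fin r} (hf : IsDistinguishing G r f) : distNum G ≤ r :=
  Nat.sInf_le ⟨f, hf⟩

lemma exists_isDistinguishing_distNum [Finite V] (G : SimpleGraph V) :
    ∃ f : V → Fin (distNum G), IsDistinguishing G (distNum G) f := by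
  obtain ⟨n, ⟨e⟩⟩ := Finite.exists_equiv_fin V
  exact Nat.sInf_mem (s := {r | ∃ f : V → Fin r, IsDistinguishing G r f})
    ⟨n, e, fun φ hφ v => e.injective (hφ v)⟩

end

namespace SimpleGraph.Iso

variable {V : Type*} {G : SimpleGraph V} {S : Set V}

def subtypeCongr [DecidablePred (· ∈ S)] (hS : ∀ ⦃u w⦄, G.Adj u w → (u ∈ S ↔ w ∈ S))
    (ψ : G.induce S ≃g G.induce S) (χ : G.induce Sᶜ ≃g G.induce Sᶜ) : G ≃g G where
  toEquiv := Equiv.Perm.subtypeCongr ψ.toEquiv χ.toEquiv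
  map_rel_iff' {u w} := by
    by_cases hu : u ∈ S <;> by_cases hw : w ∈ S
    · simp only [Equiv.Perm.subtypeCongr.left_apply _ _ hu,
        Equiv.Perm.subtypeCongr.left_apply _ _ hw]
      exact ψ.map_adj_iff
    · rw [Equiv.Perm.subtypeCongr.left_apply _ _ hu, Equiv.Perm.subtypeCongr.right_apply _ _ hw]
      exact iff_of_false (fun h => (χ ⟨w, hw⟩).2 ((hS h).1 (ψ ⟨u, hu⟩).2))
        fun h => hw ((hS h).1 hu)
    · rw [Equiv.Perm.subtypeCongr.right_apply _ _ hu, Equiv.Perm.subtypeCongr.left_apply _ _ hw]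
      exact iff_of_false (fun h => (χ ⟨u, hu⟩).2 ((hS h).2 (ψ ⟨w, hw⟩).2))
        fun h => hu ((hS h).2 hw)
    · simp only [Equiv.Perm.subtypeCongr.right_apply _ _ hu,
        Equiv.Perm.subtypeCongr.right_apply _ _ hw]
      exact χ.map_adj_iff

abbrev restrict (φ : G ≃g G) (hφ : ∀ v, φ v ∈ S ↔ v ∈ S) : G.induce S ≃g G.induce S :=
  φ.induce (φ.toEquiv.bijOn hφ)

end SimpleGraph.Iso

section

variable {V : Type*} {G : SimpleGraph V} {S : Set V} {r : ℕ}

lemma IsDistinguishing.induce (hS : ∀ ⦃u w⦄, G.Adj u w → (u ∈ S ↔ w ∈ S)) {f : V → Fin r}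
    (hf : IsDistinguishing G r f) : IsDistinguishing (G.induce S) r (f ∘ (↑)) := by
  classical
  intro ψ hψ x
  have hid := hf (Iso.subtypeCongr hS ψ .refl) fun v => by
    by_cases hv : v ∈ S
    · simpa [Iso.subtypeCongr, Equiv.Perm.subtypeCongr.left_apply _ _ hv] using hψ ⟨v, hv⟩
    · simp [Iso.subtypeCongr, Equiv.Perm.subtypeCongr.right_apply _ _ hv]
  exact Subtype.ext (by simpa [Iso.subtypeCongr] using hid x)

lemma IsDistinguishing.dite [DecidablePred (· ∈ S)] (hS : ∀ (φ : G ≃g G) v, φ v ∈ S ↔ v ∈ S)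
    {fS : S → Fin r} {fT : ↥Sᶜ → Fin r} (hfS : IsDistinguishing (G.induce S) r fS)
    (hfT : IsDistinguishing (G.induce Sᶜ) r fT) :
    IsDistinguishing G r fun v => if h : v ∈ S then fS ⟨v, h⟩ else fT ⟨v, h⟩ := by
  intro φ hφ v
  by_cases hv : v ∈ S
  · refine congrArg Subtype.val (hfS (φ.restrict (hS φ)) (fun x => ?_) ⟨v, hv⟩)
    have hx := hφ x
    beta_reduce at hx
    rwa [dif_pos ((hS φ x).2 x.2), dif_pos x.2] at hx
  · have hSc : ∀ v, φ v ∈ Sᶜ ↔ v ∈ Sᶜ := fun v => not_congr (hS φ v)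
    refine congrArg Subtype.val (hfT (φ.restrict hSc) (fun x => ?_) ⟨v, hv⟩)
    have hx := hφ x
    beta_reduce at hx
    rwa [dif_neg ((hSc x).2 x.2), dif_neg x.2] at hx

end

section

variable {V : Type*} [Finite V] {G : SimpleGraph V} {S : Set V}

lemma distNum_eq_max_of_adj_iff (hS : ∀ ⦃u w⦄, G.Adj u w → (u ∈ S ↔ w ∈ S))
    (hinv : ∀ (φ : G ≃g G) v, φ v ∈ S ↔ v ∈ S) :
    distNum G = max (distNum (G.induce S)) (distNum (G.induce Sᶜ)) := by
  classical
  obtain ⟨f, hf⟩ := exists_isDistinguishing_distNum G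
  obtain ⟨fS, hfS⟩ := exists_isDistinguishing_distNum (G.induce S)
  obtain ⟨fT, hfT⟩ := exists_isDistinguishing_distNum (G.induce Sᶜ)
  refine le_antisymm (distNum_le ((hfS.castLE (le_max_left _ _)).dite hinv
    (hfT.castLE (le_max_right _ _)))) (max_le ?_ ?_)
  · exact distNum_le (hf.induce hS)
  · exact distNum_le (hf.induce fun u w huw => not_congr (hS huw))

lemma DistCritical.eq_empty_or_eq_univ {d : ℕ} (hcrit : DistCritical G d)
    (hS : ∀ ⦃u w⦄, G.Adj u w → (u ∈ S ↔ w ∈ S)) (hinv : ∀ (φ : G ≃g G) v, φ v ∈ S ↔ v ∈ S) :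
    S = ∅ ∨ S = Set.univ := by
  have hmax := hcrit.1 ▸ distNum_eq_max_of_adj_iff hS hinv
  rcases max_choice (distNum (G.induce S)) (distNum (G.induce Sᶜ)) with h | h
  · exact .inr (by_contra fun hne => hcrit.2 S hne (h.symm.trans hmax.symm))
  · refine .inl (Set.compl_univ_iff.mp ?_)
    exact by_contra fun hne => hcrit.2 Sᶜ hne (h.symm.trans hmax.symm)

end

namespace SimpleGraph

variable {V W : Type*} {G : SimpleGraph V}

def Iso.induceSupp {V' : Type*} {G' : SimpleGraph V'} (φ : G ≃g G') (C : G.ConnectedComponent) :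
    G.induce C.supp ≃g G'.induce (φ.connectedComponentEquiv C).supp :=
  φ.induce (φ.toEquiv.bijOn fun _ => ConnectedComponent.iso_image_comp_eq_map_iff_eq_comp)

def verticesOfComponentsIsoTo (G : SimpleGraph V) (H : SimpleGraph W) : Set V :=
  {v | Nonempty (G.induce (G.connectedComponentMk v).supp ≃g H)}

variable {H : SimpleGraph W}

lemma mem_verticesOfComponentsIsoTo_iff_of_adj {u w : V} (h : G.Adj u w) :
    u ∈ G.verticesOfComponentsIsoTo H ↔ w ∈ G.verticesOfComponentsIsoTo H := by
  rw [verticesOfComponentsIsoTo, Set.mem_ofPred_eq, Set.mem_ofPred_eq,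
    ConnectedComponent.connectedComponentMk_eq_of_adj h]

lemma Iso.apply_mem_verticesOfComponentsIsoTo_iff (φ : G ≃g G) (v : V) :
    φ v ∈ G.verticesOfComponentsIsoTo H ↔ v ∈ G.verticesOfComponentsIsoTo H :=
  let e := φ.induceSupp (G.connectedComponentMk v)
  ⟨fun ⟨f⟩ => ⟨e.trans f⟩, fun ⟨f⟩ => ⟨e.symm.trans f⟩⟩

end SimpleGraph

lemma DistCritical.verticesOfComponentsIsoTo_eq_empty_or_eq_univ {V W : Type*} [Finite V]
    {G : SimpleGraph V} {d : ℕ} (hcrit : DistCritical G d) (H : SimpleGraph W) :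
    G.verticesOfComponentsIsoTo H = ∅ ∨ G.verticesOfComponentsIsoTo H = Set.univ :=
  hcrit.eq_empty_or_eq_univ (fun _ _ => mem_verticesOfComponentsIsoTo_iff_of_adj)
    Iso.apply_mem_verticesOfComponentsIsoTo_iff

theorem stmt11_general {V : Type*} [Fintype V] (G : SimpleGraph V) (d : ℕ)
    (hcrit : DistCritical G d) :
    ∀ c₁ c₂ : G.ConnectedComponent,
      Nonempty ((G.induce c₁.supp) ≃g (G.induce c₂.supp)) := by
  intro c₁ c₂
  obtain ⟨v₁, rfl⟩ := c₁.exists_rep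
  obtain ⟨v₂, rfl⟩ := c₂.exists_rep
  have hv₁ : v₁ ∈ G.verticesOfComponentsIsoTo (G.induce (G.connectedComponentMk v₁).supp) :=
    ⟨.refl⟩
  rcases hcrit.verticesOfComponentsIsoTo_eq_empty_or_eq_univ
    (G.induce (G.connectedComponentMk v₁).supp) with h | h
  · exact absurd (h ▸ hv₁) (Set.notMem_empty v₁)
  · obtain ⟨e⟩ := h ▸ Set.mem_univ v₂
    exact ⟨e.symm⟩

theorem stmt11 {V : Type*} [Fintype V] (G : SimpleGraph V) (d : ℕ) (hd : 3 ≤ d)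
    (hdisc : ¬ G.Preconnected) (hcrit : DistCritical G d) :
    ∀ c₁ c₂ : G.ConnectedComponent,
      Nonempty ((G.induce c₁.supp) ≃g (G.induce c₂.supp)) :=
  stmt11_general G d hcrit
end
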